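/- Let A ∈ ℝ^{m×n}, b ∈ range(A) (so Ax = b is a fixed consistent system), and set x_LS = A†b. Let Ã ∈ ℝ^{m×n} have all rows nonzero, b̃ ∈ ℝᵐ, E = Ã − A, ε = b̃ − b. Let {x_k} be the RK iterates for the doubly noisy system Ãx ≈ b̃ with initial point x_0 satisfying x_0 − x_LS ∈ range(Ãᵀ). Then for every k ≥ 0: 𝔼‖x_k − x_LS‖² ≤ (1 − σ̃_min²/‖Ã‖_F²)^k ‖x_0 − x_LS‖² + ‖E x_LS − ε‖²/σ̃_min², where σ̃_min is the smallest nonzero singular value of Ã. -/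

import Mathlib

/-!
From any reference point `x`, one Kaczmarz step taken from `y` changes `‖y - x‖²` in expectation
by `(‖Ax - b‖² - ‖A(y - x)‖²) / ‖A‖_F²`. Every iterate keeps `y - x` in `range(Aᵀ) = ker(AᵀA)ᗮ`,
where `‖Az‖² ≥ σ_min² ‖z‖²`, so the expected error obeys
`e_{k+1} ≤ (1 - σ_min²/‖A‖_F²) e_k + ‖Ax - b‖²/‖A‖_F²`; unrolled, the geometric series sums to
at most `‖Ax - b‖²/σ_min²`. For `x = A†b` with `b ∈ range A` one has `Ax = b`, so the residual
`Ãx - b̃` is `Ex - ε`.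
-/

open Matrix

noncomputable section

namespace RK

/-- The Euclidean inner product on `Fin n → ℝ`. -/
def dot {n : ℕ} (v w : Fin n → ℝ) : ℝ := ∑ i, v i * w i

/-- The squared Euclidean norm on `Fin n → ℝ`. -/
def normSq {n : ℕ} (v : Fin n → ℝ) : ℝ := ∑ i, v i ^ 2

/-- The Euclidean norm on `Fin n → ℝ`. -/
def euclNorm {n : ℕ} (v : Fin n → ℝ) : ℝ := Real.sqrt (normSq v)

/-- The squared Frobenius norm of a matrix. -/
def frobSq {m n : ℕ} (A : Matrix (Fin m) (Fin n) ℝ) : ℝ := ∑ i, ∑ j, A i j ^ 2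

/-- One step of the (randomized) Kaczmarz method for the system `A x ≈ b`, using row `i`:
`x ↦ x - ((aᵢᵀ x - bᵢ) / ‖aᵢ‖²) aᵢ`. -/
def rkStep {m n : ℕ} (A : Matrix (Fin m) (Fin n) ℝ) (b : Fin m → ℝ) (i : Fin m)
    (x : Fin n → ℝ) : Fin n → ℝ :=
  x - ((dot (A i) x - b i) / normSq (A i)) • A i

/-- `rkExp A b x0 k f` is the expectation `𝔼 f(x_k)` of `f` evaluated at the `k`-th iterate of the
randomized Kaczmarz algorithm applied to `A x ≈ b` started at `x0`, where at each step the row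
index `i` is drawn independently at random with probability `‖aᵢ‖² / ‖A‖_F²`. -/
def rkExp {m n : ℕ} (A : Matrix (Fin m) (Fin n) ℝ) (b : Fin m → ℝ) (x0 : Fin n → ℝ) :
    ℕ → ((Fin n → ℝ) → ℝ) → ℝ
  | 0, f => f x0
  | k + 1, f => rkExp A b x0 k fun x => ∑ i, normSq (A i) / frobSq A * f (rkStep A b i x)

/-- The four Penrose conditions: `B` is the Moore–Penrose pseudoinverse of `A`. -/
def IsMoorePenrose {m n : ℕ} (A : Matrix (Fin m) (Fin n) ℝ)
    (B : Matrix (Fin n) (Fin m) ℝ) : Prop :=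
  A * B * A = A ∧ B * A * B = B ∧ (A * B)ᵀ = A * B ∧ (B * A)ᵀ = B * A

/-- The row space `range(Aᵀ)` of a matrix `A`. -/
def rowSpace {m n : ℕ} (A : Matrix (Fin m) (Fin n) ℝ) : Set (Fin n → ℝ) :=
  {v | ∃ u : Fin m → ℝ, v = Aᵀ.mulVec u}

/-- The null space (kernel) of a matrix `A`. -/
def nullSpace {m n : ℕ} (A : Matrix (Fin m) (Fin n) ℝ) : Set (Fin n → ℝ) :=
  {v | A.mulVec v = 0}

/-- `σ` is the smallest nonzero singular value of `A`: `σ > 0`, `σ²` is an eigenvalue of `AᵀA`,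
and `σ²` is less than or equal to every nonzero eigenvalue of `AᵀA`. -/
def IsSmallestNonzeroSingularValue {m n : ℕ} (A : Matrix (Fin m) (Fin n) ℝ) (σ : ℝ) : Prop :=
  0 < σ ∧ (∃ v : Fin n → ℝ, v ≠ 0 ∧ (Aᵀ * A).mulVec v = σ ^ 2 • v) ∧
    ∀ μ : ℝ, μ ≠ 0 → (∃ v : Fin n → ℝ, v ≠ 0 ∧ (Aᵀ * A).mulVec v = μ • v) → σ ^ 2 ≤ μ

theorem _root_.Matrix.IsHermitian.mul_dotProduct_self_le_dotProduct_mulVec {ι : Type*} [Fintype ι]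
    [DecidableEq ι] {M : Matrix ι ι ℝ} (hM : M.IsHermitian) {s : ℝ}
    (hs : ∀ μ : ℝ, μ ≠ 0 → (∃ v : ι → ℝ, v ≠ 0 ∧ M *ᵥ v = μ • v) → s ≤ μ) {z : ι → ℝ}
    (hz : ∀ v, M *ᵥ v = 0 → v ⬝ᵥ z = 0) :
    s * (z ⬝ᵥ z) ≤ z ⬝ᵥ (M *ᵥ z) := by
  set b := hM.eigenvectorBasis
  set μ := hM.eigenvalues
  have hb : ∀ j, M *ᵥ b j = μ j • b j := hM.mulVec_eigenvectorBasis
  set c : ι → ℝ := fun j => b j ⬝ᵥ z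
  have hinner : ∀ j, inner ℝ (b j) (WithLp.toLp 2 z) = c j := fun j => dotProduct_comm _ _
  have hexpand : z = ∑ j, c j • ⇑(b j) := by
    simpa [hinner] using congrArg WithLp.ofLp (b.sum_repr' (WithLp.toLp 2 z)).symm
  have hnorm : z ⬝ᵥ z = ∑ j, c j * c j := by
    rw [show z ⬝ᵥ z = inner ℝ (WithLp.toLp 2 z) (WithLp.toLp 2 z) from rfl,
      ← b.sum_inner_mul_inner]
    exact Finset.sum_congr rfl fun j _ => by rw [real_inner_comm, hinner]
  have hquad : z ⬝ᵥ (M *ᵥ z) = ∑ j, μ j * (c j * c j) := by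
    conv_lhs => arg 2; rw [hexpand]
    simp only [mulVec_sum, mulVec_smul, hb, smul_smul, dotProduct_sum, dotProduct_smul,
      smul_eq_mul]
    exact Finset.sum_congr rfl fun j _ => by rw [dotProduct_comm]; ring
  rw [hnorm, hquad, Finset.mul_sum]
  refine Finset.sum_le_sum fun j _ => ?_
  by_cases hμ : μ j = 0
  · have hc : c j = 0 := hz _ (by rw [hb, hμ, zero_smul])
    simp [hc]
  · have hbj : (b j : ι → ℝ) ≠ 0 := by simpa using b.orthonormal.ne_zero j
    exact mul_le_mul_of_nonneg_right (hs _ hμ ⟨b j, hbj, hb j⟩) (mul_self_nonneg _)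

section

variable {m n : ℕ}

lemma normSq_eq_dotProduct (v : Fin n → ℝ) : normSq v = v ⬝ᵥ v := by
  simp only [normSq, dotProduct, sq]

lemma normSq_nonneg (v : Fin n → ℝ) : 0 ≤ normSq v :=
  Finset.sum_nonneg fun _ _ => sq_nonneg _

lemma normSq_pos {v : Fin n → ℝ} (hv : v ≠ 0) : 0 < normSq v := by
  rw [normSq_eq_dotProduct]
  exact dotProduct_self_star_pos_iff.mpr hv

lemma frobSq_eq_sum_normSq (A : Matrix (Fin m) (Fin n) ℝ) : frobSq A = ∑ i, normSq (A i) := rfl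

lemma frobSq_nonneg (A : Matrix (Fin m) (Fin n) ℝ) : 0 ≤ frobSq A :=
  Finset.sum_nonneg fun i _ => normSq_nonneg (A i)

lemma sum_normSq_row_div_frobSq {A : Matrix (Fin m) (Fin n) ℝ} (hA : frobSq A ≠ 0) :
    ∑ i, normSq (A i) / frobSq A = 1 := by
  rw [← Finset.sum_div, ← frobSq_eq_sum_normSq, div_self hA]

lemma normSq_mulVec_le (A : Matrix (Fin m) (Fin n) ℝ) (v : Fin n → ℝ) :
    normSq (A *ᵥ v) ≤ frobSq A * normSq v := by
  rw [frobSq_eq_sum_normSq, Finset.sum_mul]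
  exact Finset.sum_le_sum fun i _ => Finset.sum_mul_sq_le_sq_mul_sq Finset.univ (A i) v

lemma dotProduct_transpose_mul_self_mulVec (A : Matrix (Fin m) (Fin n) ℝ) (v : Fin n → ℝ) :
    v ⬝ᵥ ((Aᵀ * A) *ᵥ v) = normSq (A *ᵥ v) := by
  rw [← mulVec_mulVec, dotProduct_mulVec, vecMul_transpose, normSq_eq_dotProduct]

lemma normSq_sub_smul (z a : Fin n → ℝ) (c : ℝ) :
    normSq (z - c • a) = normSq z - 2 * c * (a ⬝ᵥ z) + c ^ 2 * normSq a := by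
  simp only [normSq_eq_dotProduct, sub_dotProduct, dotProduct_sub, smul_dotProduct,
    dotProduct_smul, smul_eq_mul, dotProduct_comm z a]
  ring

lemma mem_rowSpace_iff {A : Matrix (Fin m) (Fin n) ℝ} {v : Fin n → ℝ} :
    v ∈ rowSpace A ↔ v ∈ LinearMap.range Aᵀ.mulVecLin := by
  simp only [rowSpace, LinearMap.mem_range, mulVecLin_apply, Set.mem_ofPred_eq, eq_comm]

lemma row_mem_rowSpace (A : Matrix (Fin m) (Fin n) ℝ) (i : Fin m) : A i ∈ rowSpace A :=
  ⟨Pi.single i 1, by rw [mulVec_single_one]; rfl⟩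

namespace IsSmallestNonzeroSingularValue

variable {A : Matrix (Fin m) (Fin n) ℝ} {σ : ℝ}

/-- On `range(Aᵀ) = ker(AᵀA)ᗮ` only the nonzero eigenvalues of `AᵀA` contribute. -/
lemma mul_normSq_le_normSq_mulVec (hσ : IsSmallestNonzeroSingularValue A σ) {z : Fin n → ℝ}
    (hz : z ∈ rowSpace A) : σ ^ 2 * normSq z ≤ normSq (A *ᵥ z) := by
  obtain ⟨w, rfl⟩ := hz
  rw [normSq_eq_dotProduct, ← dotProduct_transpose_mul_self_mulVec]
  have hM : (Aᵀ * A).IsHermitian := by simpa using isHermitian_conjTranspose_mul_self A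
  refine hM.mul_dotProduct_self_le_dotProduct_mulVec hσ.2.2 fun v hv => ?_
  have hAv : A *ᵥ v = 0 := by
    rw [← dotProduct_self_eq_zero, ← normSq_eq_dotProduct,
      ← dotProduct_transpose_mul_self_mulVec, hv, dotProduct_zero]
  rw [dotProduct_mulVec, vecMul_transpose, hAv, zero_dotProduct]

lemma sq_le_frobSq (hσ : IsSmallestNonzeroSingularValue A σ) : σ ^ 2 ≤ frobSq A := by
  obtain ⟨v, hv, hAv⟩ := hσ.2.1
  refine le_of_mul_le_mul_right ?_ (normSq_pos hv)
  calc σ ^ 2 * normSq v = normSq (A *ᵥ v) := by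
        rw [← dotProduct_transpose_mul_self_mulVec, hAv, dotProduct_smul, smul_eq_mul,
          normSq_eq_dotProduct]
    _ ≤ frobSq A * normSq v := normSq_mulVec_le A v

lemma frobSq_pos (hσ : IsSmallestNonzeroSingularValue A σ) : 0 < frobSq A :=
  (pow_pos hσ.1 2).trans_le hσ.sq_le_frobSq

end IsSmallestNonzeroSingularValue

section Step

variable {A : Matrix (Fin m) (Fin n) ℝ} {b : Fin m → ℝ} {x y : Fin n → ℝ}

lemma rkStep_sub_mem_rowSpace (i : Fin m) (hy : y - x ∈ rowSpace A) :
    rkStep A b i y - x ∈ rowSpace A := by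
  rw [rkStep, sub_right_comm, mem_rowSpace_iff]
  exact Submodule.sub_mem _ (mem_rowSpace_iff.mp hy)
    (Submodule.smul_mem _ _ (mem_rowSpace_iff.mp (row_mem_rowSpace A i)))

lemma normSq_rkStep_sub {i : Fin m} (hi : A i ≠ 0) :
    normSq (rkStep A b i y - x) =
      normSq (y - x) + ((A *ᵥ x - b) i ^ 2 - (A *ᵥ (y - x)) i ^ 2) / normSq (A i) := by
  have hai : normSq (A i) ≠ 0 := (normSq_pos hi).ne'
  have hres : dot (A i) y - b i = (A *ᵥ (y - x)) i + (A *ᵥ x - b) i := by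
    simp only [dot, Pi.sub_apply, mulVec, dotProduct, mul_sub, Finset.sum_sub_distrib]
    ring
  rw [rkStep, sub_right_comm, normSq_sub_smul, hres]
  change _ - 2 * _ * (A *ᵥ (y - x)) i + _ = _
  field_simp
  ring

lemma sum_mul_normSq_rkStep_sub (hrows : ∀ i, A i ≠ 0) (hA : frobSq A ≠ 0) :
    ∑ i, normSq (A i) / frobSq A * normSq (rkStep A b i y - x) =
      normSq (y - x) - (normSq (A *ᵥ (y - x)) - normSq (A *ᵥ x - b)) / frobSq A := by
  have hterm : ∀ i, normSq (A i) / frobSq A * normSq (rkStep A b i y - x) =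
      normSq (A i) / frobSq A * normSq (y - x) +
        ((A *ᵥ x - b) i ^ 2 - (A *ᵥ (y - x)) i ^ 2) / frobSq A := fun i => by
    have hai : normSq (A i) ≠ 0 := (normSq_pos (hrows i)).ne'
    rw [normSq_rkStep_sub (hrows i)]
    field_simp
  simp only [hterm, Finset.sum_add_distrib, ← Finset.sum_mul, sum_normSq_row_div_frobSq hA,
    ← Finset.sum_div, Finset.sum_sub_distrib]
  simp only [normSq]
  ring

lemma sum_mul_normSq_rkStep_sub_le {σ : ℝ} (hrows : ∀ i, A i ≠ 0)
    (hσ : IsSmallestNonzeroSingularValue A σ) (hy : y - x ∈ rowSpace A) :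
    ∑ i, normSq (A i) / frobSq A * normSq (rkStep A b i y - x) ≤
      (1 - σ ^ 2 / frobSq A) * normSq (y - x) + normSq (A *ᵥ x - b) / frobSq A := by
  have hA := hσ.frobSq_pos
  rw [sum_mul_normSq_rkStep_sub hrows hA.ne']
  have hspec := div_le_div_of_nonneg_right (hσ.mul_normSq_le_normSq_mulVec hy) hA.le
  have hexpand : (1 - σ ^ 2 / frobSq A) * normSq (y - x) =
      normSq (y - x) - σ ^ 2 * normSq (y - x) / frobSq A := by ring
  rw [hexpand, sub_div]
  linarith

end Step

section Expectation

variable {A : Matrix (Fin m) (Fin n) ℝ} {b : Fin m → ℝ} {x0 : Fin n → ℝ}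

lemma rkExp_mono_on {S : Set (Fin n → ℝ)} (hS : ∀ i, Set.MapsTo (rkStep A b i) S S)
    (hx0 : x0 ∈ S) (k : ℕ) {f g : (Fin n → ℝ) → ℝ} (hfg : ∀ y ∈ S, f y ≤ g y) :
    rkExp A b x0 k f ≤ rkExp A b x0 k g := by
  induction k generalizing f g with
  | zero => exact hfg x0 hx0
  | succ k ih =>
    refine ih fun y hy => Finset.sum_le_sum fun i _ => ?_
    exact mul_le_mul_of_nonneg_left (hfg _ (hS i hy))
      (div_nonneg (normSq_nonneg _) (frobSq_nonneg A))

lemma rkExp_mul_add_const (hA : frobSq A ≠ 0) (k : ℕ) (f : (Fin n → ℝ) → ℝ) (a c : ℝ) :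
    rkExp A b x0 k (fun y => a * f y + c) = a * rkExp A b x0 k f + c := by
  induction k generalizing f with
  | zero => rfl
  | succ k ih =>
    have hstep : (fun y => ∑ i, normSq (A i) / frobSq A * (a * f (rkStep A b i y) + c)) =
        fun y => a * ∑ i, normSq (A i) / frobSq A * f (rkStep A b i y) + c := by
      funext y
      simp only [mul_add, Finset.sum_add_distrib, ← Finset.sum_mul,
        sum_normSq_row_div_frobSq hA, one_mul, Finset.mul_sum]
      exact congrArg (· + c) (Finset.sum_congr rfl fun i _ => by ring)
    exact (congrArg (rkExp A b x0 k) hstep).trans (ih _)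

lemma rkExp_normSq_sub_succ_le {σ : ℝ} {x : Fin n → ℝ} (hrows : ∀ i, A i ≠ 0)
    (hσ : IsSmallestNonzeroSingularValue A σ) (hx0 : x0 - x ∈ rowSpace A) (k : ℕ) :
    rkExp A b x0 (k + 1) (fun y => normSq (y - x)) ≤
      (1 - σ ^ 2 / frobSq A) * rkExp A b x0 k (fun y => normSq (y - x)) +
        normSq (A *ᵥ x - b) / frobSq A :=
  calc rkExp A b x0 (k + 1) (fun y => normSq (y - x))
      ≤ rkExp A b x0 k (fun y => (1 - σ ^ 2 / frobSq A) * normSq (y - x) +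
          normSq (A *ᵥ x - b) / frobSq A) :=
        rkExp_mono_on (S := {y | y - x ∈ rowSpace A})
          (fun i _ hy => rkStep_sub_mem_rowSpace i hy) hx0 k
          fun _ hy => sum_mul_normSq_rkStep_sub_le hrows hσ hy
    _ = _ := rkExp_mul_add_const hσ.frobSq_pos.ne' k _ _ _

end Expectation

lemma le_pow_mul_add_of_le_mul_add {u : ℕ → ℝ} {q D : ℝ} (hq : 0 ≤ q) (hD : 0 ≤ D)
    (hu : ∀ k, u (k + 1) ≤ q * u k + (1 - q) * D) (k : ℕ) : u k ≤ q ^ k * u 0 + D := by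
  induction k with
  | zero => simpa using hD
  | succ k ih =>
    calc u (k + 1) ≤ q * u k + (1 - q) * D := hu k
      _ ≤ q * (q ^ k * u 0 + D) + (1 - q) * D := by gcongr
      _ = q ^ (k + 1) * u 0 + D := by ring

theorem rkExp_normSq_sub_le {A : Matrix (Fin m) (Fin n) ℝ} {b : Fin m → ℝ} {σ : ℝ}
    {x x0 : Fin n → ℝ} (hrows : ∀ i, A i ≠ 0) (hσ : IsSmallestNonzeroSingularValue A σ)
    (hx0 : x0 - x ∈ rowSpace A) (k : ℕ) :
    rkExp A b x0 k (fun y => normSq (y - x)) ≤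
      (1 - σ ^ 2 / frobSq A) ^ k * normSq (x0 - x) + normSq (A *ᵥ x - b) / σ ^ 2 := by
  have hA := hσ.frobSq_pos
  have hσ0 : σ ≠ 0 := hσ.1.ne'
  have hq : 0 ≤ 1 - σ ^ 2 / frobSq A := sub_nonneg.mpr ((div_le_one hA).mpr hσ.sq_le_frobSq)
  have hdrift : (1 - (1 - σ ^ 2 / frobSq A)) * (normSq (A *ᵥ x - b) / σ ^ 2) =
      normSq (A *ᵥ x - b) / frobSq A := by
    field_simp
    ring
  refine le_pow_mul_add_of_le_mul_add (u := fun k => rkExp A b x0 k _) hq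
    (div_nonneg (normSq_nonneg _) (sq_nonneg σ)) (fun k => ?_) k
  rw [hdrift]
  exact rkExp_normSq_sub_succ_le hrows hσ hx0 k

end

theorem rk_doubly_noisy_bergou_general {m n : ℕ}
    (At : Matrix (Fin m) (Fin n) ℝ) (bt : Fin m → ℝ)
    (hrows : ∀ i, At i ≠ 0)
    (σmin : ℝ) (hσ : IsSmallestNonzeroSingularValue At σmin)
    (A : Matrix (Fin m) (Fin n) ℝ) (b : Fin m → ℝ)
    (hcons : ∃ x, A.mulVec x = b)
    (Ap : Matrix (Fin n) (Fin m) ℝ) (hAp : IsMoorePenrose A Ap)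
    (x0 : Fin n → ℝ) (hx0 : x0 - Ap.mulVec b ∈ rowSpace At)
    (k : ℕ) :
    rkExp At bt x0 k (fun y => normSq (y - Ap.mulVec b)) ≤
      (1 - σmin ^ 2 / frobSq At) ^ k * normSq (x0 - Ap.mulVec b)
        + normSq ((At - A).mulVec (Ap.mulVec b) - (bt - b)) / σmin ^ 2 := by
  obtain ⟨x, rfl⟩ := hcons
  have hsolves : A *ᵥ (Ap *ᵥ (A *ᵥ x)) = A *ᵥ x := by
    rw [mulVec_mulVec, mulVec_mulVec, hAp.1]
  have hresidual :
      (At - A) *ᵥ (Ap *ᵥ (A *ᵥ x)) - (bt - A *ᵥ x) = At *ᵥ (Ap *ᵥ (A *ᵥ x)) - bt := by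
    rw [sub_mulVec, hsolves]
    abel
  rw [hresidual]
  exact rkExp_normSq_sub_le hrows hσ hx0 k

/-- **Theorem 1.3 (Bergou et al.).** For a fixed consistent system `Ax = b` with
`x_LS = A†b`, and RK applied to the doubly noisy system `Ãx ≈ b̃` (`E = Ã − A`, `ε = b̃ − b`)
with `x₀ − x_LS ∈ range(Ãᵀ)`:
`𝔼‖x_k − x_LS‖² ≤ (1 − σ̃_min²/‖Ã‖_F²)^k ‖x₀ − x_LS‖² + ‖E x_LS − ε‖²/σ̃_min²`. -/
theorem rk_doubly_noisy_bergou {m n : ℕ}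
    (At : Matrix (Fin m) (Fin n) ℝ) (bt : Fin m → ℝ)
    (hAt : At ≠ 0) (hrows : ∀ i, At i ≠ 0)
    (σmin : ℝ) (hσ : IsSmallestNonzeroSingularValue At σmin)
    (A : Matrix (Fin m) (Fin n) ℝ) (b : Fin m → ℝ)
    (hcons : ∃ x, A.mulVec x = b)
    (Ap : Matrix (Fin n) (Fin m) ℝ) (hAp : IsMoorePenrose A Ap)
    (x0 : Fin n → ℝ) (hx0 : x0 - Ap.mulVec b ∈ rowSpace At)
    (k : ℕ) :
    rkExp At bt x0 k (fun y => normSq (y - Ap.mulVec b)) ≤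
      (1 - σmin ^ 2 / frobSq At) ^ k * normSq (x0 - Ap.mulVec b)
        + normSq ((At - A).mulVec (Ap.mulVec b) - (bt - b)) / σmin ^ 2 :=
  rk_doubly_noisy_bergou_general At bt hrows σmin hσ A b hcons Ap hAp x0 hx0 k

end RK
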